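/- arXiv:1812.06355 — 5 statements merged into one kernel-verified Lean document; each statement's English description precedes it below -/
import Mathlib

section
/- If v1 < v2 and R ≥ 0, then D(t) ≥ R for all t ∈ [0, L/v2] if and only if t_d ≤ L/v2 − R/v1, i.e., if and only if the time gap L/v2 − t_d between a1's departure and a2's arrival is at least the time offset R/v1. -/
/-- Same-direction case, `v1 < v2`: `D t ≥ R` for all `t ∈ [0, L/v2]` iff
`t_d ≤ L/v2 - R/v1`, i.e., iff the time gap `L/v2 - t_d` between `a1`'s
departure and `a2`'s arrival is at least the time offset `R/v1`. -/
theorem same_direction_slower_agent_safety_iff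
    (L v1 v2 t_d R : ℝ) (hL : 0 < L) (hv1 : 0 < v1) (hv2 : 0 < v2)
    (htd0 : 0 ≤ t_d) (htd : t_d ≤ L / v2) (hv : v1 < v2) (hR : 0 ≤ R)
    (D : ℝ → ℝ) (hD : ∀ t, D t = L - v2 * t + v1 * max (t - t_d) 0) :
    ((∀ t ∈ Set.Icc 0 (L / v2), R ≤ D t) ↔ t_d ≤ L / v2 - R / v1) ∧
    ((∀ t ∈ Set.Icc 0 (L / v2), R ≤ D t) ↔ R / v1 ≤ L / v2 - t_d) := by
  have hLv2 : 0 ≤ L / v2 := le_of_lt (div_pos hL hv2)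
  have hL2 : v2 * (L / v2) = L := by field_simp
  have key : (∀ t ∈ Set.Icc 0 (L / v2), R ≤ D t) ↔ R / v1 ≤ L / v2 - t_d := by
    constructor
    · intro h
      have h2 := h (L / v2) ⟨hLv2, le_refl _⟩
      rw [hD, max_eq_left (by linarith)] at h2
      rw [div_le_iff₀ hv1]
      nlinarith
    · intro h t ht
      obtain ⟨ht0, ht1⟩ := ht
      rw [hD]
      have hR' : R ≤ v1 * (L / v2 - t_d) := by
        rw [div_le_iff₀ hv1] at h; nlinarith
      rcases le_or_gt t t_d with hc | hc
      · rw [max_eq_right (by linarith)]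
        nlinarith
      · rw [max_eq_left (by linarith)]
        nlinarith
  refine ⟨key.trans ⟨fun h => by linarith, fun h => by linarith⟩, key⟩
end

section
/- If v1 ≥ v2 and R ≥ 0, then D(t) ≥ R for all t ∈ [0, L/v2] if and only if t_d ≤ (L − R)/v2, i.e., if and only if the time gap L/v2 − t_d between a1's departure and a2's arrival is at least the time offset R/v2. -/
/-- Same-direction case, `v1 ≥ v2`: `D t ≥ R` for all `t ∈ [0, L/v2]` iff
`t_d ≤ (L - R)/v2`, i.e., iff the time gap `L/v2 - t_d` between `a1`'s
departure and `a2`'s arrival is at least the time offset `R/v2`. -/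
theorem same_direction_faster_agent_safety_iff
    (L v1 v2 t_d R : ℝ) (hL : 0 < L) (hv1 : 0 < v1) (hv2 : 0 < v2)
    (htd0 : 0 ≤ t_d) (htd : t_d ≤ L / v2) (hv : v2 ≤ v1) (hR : 0 ≤ R)
    (D : ℝ → ℝ) (hD : ∀ t, D t = L - v2 * t + v1 * max (t - t_d) 0) :
    ((∀ t ∈ Set.Icc 0 (L / v2), R ≤ D t) ↔ t_d ≤ (L - R) / v2) ∧
    ((∀ t ∈ Set.Icc 0 (L / v2), R ≤ D t) ↔ R / v2 ≤ L / v2 - t_d) := by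
  have key : (∀ t ∈ Set.Icc 0 (L / v2), R ≤ D t) ↔ t_d ≤ (L - R) / v2 := by
    constructor
    · intro h
      have := h t_d ⟨htd0, htd⟩
      rw [hD t_d] at this
      simp at this
      rw [le_div_iff₀ hv2]
      nlinarith
    · intro h t ht
      rw [hD t]
      rw [le_div_iff₀ hv2] at h
      rcases le_or_gt t t_d with h1 | h1
      · rw [max_eq_right (by linarith)]
        nlinarith
      · rw [max_eq_left (by linarith)]
        nlinarith [ht.1, ht.2, mul_le_mul_of_nonneg_right hv (le_of_lt (sub_pos.mpr h1))]
  refine ⟨key, key.trans ?_⟩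
  rw [le_div_iff₀ hv2, div_le_iff₀ hv2, sub_mul, div_mul_cancel₀ _ (ne_of_gt hv2)]
  constructor <;> intro <;> linarith
end

section
/- For any positive speeds v1 and v2 and any R ≥ 0, D(t) ≥ R for all t ∈ [0, L/v2] if and only if L/v2 − t_d ≥ R/min(v1, v2); that is, the minimal required time offset between a1's departure from the cell and a2's arrival at the cell in the same-direction case is ΔT = R/min(v1, v2). -/
/-- Same-direction case, general speeds: `D t ≥ R` for all `t ∈ [0, L/v2]` iff
`L/v2 - t_d ≥ R / min v1 v2`; i.e., the minimal required time offset between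
`a1`'s departure and `a2`'s arrival is `ΔT = R / min v1 v2`. -/
theorem same_direction_time_offset
    (L v1 v2 t_d R : ℝ) (hL : 0 < L) (hv1 : 0 < v1) (hv2 : 0 < v2)
    (htd0 : 0 ≤ t_d) (htd : t_d ≤ L / v2) (hR : 0 ≤ R)
    (D : ℝ → ℝ) (hD : ∀ t, D t = L - v2 * t + v1 * max (t - t_d) 0) :
    (∀ t ∈ Set.Icc 0 (L / v2), R ≤ D t) ↔ R / min v1 v2 ≤ L / v2 - t_d := by
  have hm : 0 < min v1 v2 := lt_min hv1 hv2
  have hL2 : v2 * (L / v2) = L := by field_simp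
  rw [div_le_iff₀ hm]
  constructor
  · intro h
    have h1 := h t_d ⟨htd0, htd⟩
    have h2 := h (L / v2) ⟨le_trans htd0 htd, le_refl _⟩
    rw [hD] at h1 h2
    have hmax1 : max (t_d - t_d) (0:ℝ) = 0 := by simp
    have hmax2 : max (L / v2 - t_d) (0:ℝ) = L / v2 - t_d :=
      max_eq_left (by linarith)
    rw [hmax1] at h1
    rw [hmax2] at h2
    rcases min_le_iff.mpr (Or.inl (le_refl v1)) with _
    rcases le_total v1 v2 with hc | hc
    · rw [min_eq_left hc]; nlinarith
    · rw [min_eq_right hc]; nlinarith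
  · intro h t ⟨ht0, ht1⟩
    rw [hD]
    have hmv1 : min v1 v2 ≤ v1 := min_le_left _ _
    have hmv2 : min v1 v2 ≤ v2 := min_le_right _ _
    rcases le_total t t_d with hc | hc
    · rw [max_eq_right (by linarith)]
      nlinarith
    · rw [max_eq_left (by linarith)]
      nlinarith [mul_le_mul_of_nonneg_right hmv2 (by linarith : (0:ℝ) ≤ L / v2 - t),
        mul_le_mul_of_nonneg_right hmv1 (by linarith : (0:ℝ) ≤ t - t_d)]
end

section
/- The minimum over the interval [0, L/v2] of the piecewise squared inter-agent distance g(t) = (v1·max(t − t_d, 0))² + (L − v2·t)² equals v1²·(L − v2·t_d)²/(v1² + v2²). -/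
/-- Orthogonal-direction case: the minimum over `[0, L/v2]` of the piecewise
squared inter-agent distance `g t = (v1*max (t - t_d) 0)^2 + (L - v2*t)^2`
equals `v1^2*(L - v2*t_d)^2/(v1^2 + v2^2)`. -/
theorem orthogonal_min_squared_distance
    (L v1 v2 t_d : ℝ) (hL : 0 < L) (hv1 : 0 < v1) (hv2 : 0 < v2)
    (htd0 : 0 ≤ t_d) (htd : t_d ≤ L / v2)
    (g : ℝ → ℝ) (hg : ∀ t, g t = (v1 * max (t - t_d) 0)^2 + (L - v2 * t)^2) :
    IsLeast (g '' Set.Icc 0 (L / v2)) (v1^2 * (L - v2 * t_d)^2 / (v1^2 + v2^2)) := by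
  have hS : 0 < v1^2 + v2^2 := by positivity
  have htdL : v2 * t_d ≤ L := by
    nlinarith [(le_div_iff₀ hv2).mp htd]
  constructor
  · -- attained at t* = (v1² t_d + v2 L)/S
    set S := v1^2 + v2^2 with hSdef
    refine ⟨(v1^2 * t_d + v2 * L) / S, ?_, ?_⟩
    · constructor
      · positivity
      · rw [div_le_div_iff₀ hS hv2]
        nlinarith [sq_nonneg v1, mul_le_mul_of_nonneg_left htdL (le_of_lt (mul_pos hv1 hv1))]
    · rw [hg]
      have hmax : max ((v1^2 * t_d + v2 * L) / S - t_d) 0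
          = v2 * (L - v2 * t_d) / S := by
        rw [max_eq_left]
        · field_simp; ring
        · rw [sub_nonneg, le_div_iff₀ hS]
          nlinarith
      rw [hmax]
      field_simp
      ring
  · rintro y ⟨t, ⟨ht0, ht1⟩, rfl⟩
    rw [hg]
    rw [div_le_iff₀ hS]
    rcases le_total t t_d with h | h
    · rw [max_eq_right (by linarith)]
      have h1 : L - v2 * t_d ≤ L - v2 * t := by nlinarith
      have h0 : 0 ≤ L - v2 * t_d := by linarith
      nlinarith [sq_nonneg (v1 * max (t - t_d) 0), sq_nonneg (v2 * (L - v2 * t)), mul_le_mul h1 h1 h0 (by linarith), sq_nonneg (v1 * max (t-t_d) 0)]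
    · rw [max_eq_left (by linarith)]
      nlinarith [sq_nonneg (v1 * (v1 * (t - t_d)) - v2 * (L - v2 * t))]
end

section
/- For any R ≥ 0, the squared distance g(t) = (v1·max(t − t_d, 0))² + (L − v2·t)² satisfies g(t) ≥ R² for all t ∈ [0, L/v2] if and only if v1·(L − v2·t_d) ≥ √(v1² + v2²)·R. -/
/-- Orthogonal-direction case: the squared distance
`g t = (v1*max (t - t_d) 0)^2 + (L - v2*t)^2` satisfies `g t ≥ R^2` for all
`t ∈ [0, L/v2]` iff `v1*(L - v2*t_d) ≥ √(v1^2 + v2^2)*R`. -/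
theorem orthogonal_safety_iff
    (L v1 v2 t_d R : ℝ) (hL : 0 < L) (hv1 : 0 < v1) (hv2 : 0 < v2)
    (htd0 : 0 ≤ t_d) (htd : t_d ≤ L / v2) (hR : 0 ≤ R)
    (g : ℝ → ℝ) (hg : ∀ t, g t = (v1 * max (t - t_d) 0)^2 + (L - v2 * t)^2) :
    (∀ t ∈ Set.Icc 0 (L / v2), R^2 ≤ g t) ↔
      Real.sqrt (v1^2 + v2^2) * R ≤ v1 * (L - v2 * t_d) := by
  have hS : 0 < v1^2 + v2^2 := by positivity
  have hD : 0 ≤ L - v2 * t_d := by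
    have := (le_div_iff₀ hv2).mp htd
    linarith
  have hs : 0 ≤ Real.sqrt (v1^2 + v2^2) := Real.sqrt_nonneg _
  have hsq : Real.sqrt (v1^2 + v2^2) ^ 2 = v1^2 + v2^2 := Real.sq_sqrt hS.le
  constructor
  · intro h
    set tstar : ℝ := (v1^2 * t_d + v2 * L) / (v1^2 + v2^2) with htstar
    have h1 : 0 ≤ tstar := by
      apply div_nonneg _ hS.le
      nlinarith
    have h2 : tstar ≤ L / v2 := by
      rw [div_le_div_iff₀ hS hv2]
      nlinarith
    have hts : t_d ≤ tstar := by
      rw [htstar, le_div_iff₀ hS]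
      nlinarith
    have key := h tstar ⟨h1, h2⟩
    rw [hg, max_eq_left (by linarith)] at key
    have hval : (v1 * (tstar - t_d))^2 + (L - v2 * tstar)^2
        = v1^2 * (L - v2 * t_d)^2 / (v1^2 + v2^2) := by
      rw [htstar]; field_simp; ring
    rw [hval] at key
    have hkey2 : (v1^2 + v2^2) * R^2 ≤ (v1 * (L - v2 * t_d))^2 := by
      rw [le_div_iff₀ hS] at key
      nlinarith
    have := Real.sqrt_le_sqrt hkey2
    rwa [Real.sqrt_mul hS.le, Real.sqrt_sq hR, Real.sqrt_sq (by positivity)] at this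
  · intro h t ht
    have hSR : (v1^2 + v2^2) * R^2 ≤ (v1 * (L - v2 * t_d))^2 := by
      nlinarith [mul_nonneg hs hR, mul_nonneg hv1.le hD]
    rw [hg]
    rcases le_total t t_d with hc | hc
    · rw [max_eq_right (by linarith)]
      have hb : L - v2 * t_d ≤ L - v2 * t := by nlinarith
      have hRD : R^2 ≤ (L - v2 * t_d)^2 := by nlinarith [sq_nonneg (v2 * (L - v2 * t_d))]
      nlinarith [mul_le_mul hb hb hD (by linarith : (0:ℝ) ≤ L - v2 * t)]
    · rw [max_eq_left (by linarith)]
      have hcs : 0 ≤ (v1^2 * (t - t_d) - v2 * (L - v2 * t))^2 := sq_nonneg _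
      nlinarith
end
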